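/- arXiv:2102.04461 — 3 statements merged into one kernel-verified Lean document; each statement's English description precedes it below -/
import Mathlib

section
/- For a coupling π ∈ Π(P,Q), the cross-covariance matrix σ_π lies on the topological boundary of the covariance set F(P,Q) if and only if there exists a nonzero matrix M ∈ M_{I,J}(ℝ) such that Tr(Mᵀ σ_π) = sup over all π̃ ∈ Π(P,Q) of Tr(Mᵀ σ_{π̃}). -/
open MeasureTheory Matrix

/-- The set of couplings of `P` and `Q`. -/
def couplings {I J : ℕ} (P : Measure (Fin I → ℝ)) (Q : Measure (Fin J → ℝ)) :
    Set (Measure ((Fin I → ℝ) × (Fin J → ℝ))) :=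
  {π | IsProbabilityMeasure π ∧ π.map Prod.fst = P ∧ π.map Prod.snd = Q}

/-- The cross-covariance matrix of a coupling. -/
noncomputable def crossCov {I J : ℕ} (π : Measure ((Fin I → ℝ) × (Fin J → ℝ))) :
    Matrix (Fin I) (Fin J) ℝ :=
  Matrix.of fun i j => ∫ p, p.1 i * p.2 j ∂π

/-- The covariance set `F(P,Q)`. -/
noncomputable def covSet {I J : ℕ} (P : Measure (Fin I → ℝ)) (Q : Measure (Fin J → ℝ)) :
    Set (Matrix (Fin I) (Fin J) ℝ) :=
  crossCov '' couplings P Q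

open Set
open scoped ENNReal

/-! The covariance set `F(P,Q)` is convex (a mixture of couplings is a coupling and `σ` is affine
in the coupling) and bounded (`|σᵢⱼ| ≤ E‖x‖² + E‖y‖²`) in the finite-dimensional space of `I × J`
matrices, on which every linear functional has the form `N ↦ Tr(Mᵀ N)`. A point of a convex set
in finite dimension lies on its frontier iff it maximizes a nonzero linear functional over the
set: when the interior is nonempty, separate the point from the interior by Hahn–Banach; when it
is empty, the set lies in a hyperplane. Conversely, a nonzero linear functional has no local
maximum. -/

section ConvexFrontier

variable {E : Type*} [NormedAddCommGroup E] [NormedSpace ℝ E] {s : Set E} {x : E}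

theorem ContinuousLinearMap.eq_zero_of_isMaxOn_of_mem_interior {f : StrongDual ℝ E}
    (hf : IsMaxOn f s x) (hx : x ∈ interior s) : f = 0 :=
  (hf.isLocalMax (mem_interior_iff_mem_nhds.1 hx)).hasFDerivAt_eq_zero f.hasFDerivAt

theorem Convex.exists_isMaxOn_of_interior_nonempty (hs : Convex ℝ s)
    (hne : (interior s).Nonempty) (hx : x ∉ interior s) :
    ∃ f : StrongDual ℝ E, f ≠ 0 ∧ IsMaxOn f s x := by
  obtain ⟨f, hf⟩ := geometric_hahn_banach_open_point hs.interior isOpen_interior hx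
  obtain ⟨z, hz⟩ := hne
  refine ⟨f, fun h ↦ by simpa [h] using hf z hz, fun y hy ↦ ?_⟩
  have : s ⊆ closure (interior s) := by
    rw [hs.closure_interior_eq_closure_of_nonempty_interior ⟨z, hz⟩]
    exact subset_closure
  exact closure_lt_subset_le f.continuous continuous_const
    (closure_mono hf (this hy))

theorem Convex.exists_ne_zero_forall_eq_of_interior_eq_empty [FiniteDimensional ℝ E]
    (hs : Convex ℝ s) (hempty : interior s = ∅) (hx : x ∈ s) :
    ∃ f : StrongDual ℝ E, f ≠ 0 ∧ ∀ y ∈ s, f y = f x := by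
  have hdir : (affineSpan ℝ s).direction < ⊤ := by
    rw [lt_top_iff_ne_top, Ne, AffineSubspace.direction_eq_top_iff_of_nonempty
      ⟨x, subset_affineSpan ℝ s hx⟩, ← hs.interior_nonempty_iff_affineSpan_eq_top, hempty]
    exact not_nonempty_empty
  obtain ⟨φ, hφ, hker⟩ := Submodule.exists_dual_map_eq_bot_of_lt_top hdir inferInstance
  refine ⟨LinearMap.toContinuousLinearMap φ, by simpa using hφ, fun y hy ↦ ?_⟩
  have hyx : y - x ∈ (affineSpan ℝ s).direction :=
    AffineSubspace.vsub_mem_direction (subset_affineSpan ℝ s hy) (subset_affineSpan ℝ s hx)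
  have : φ (y - x) = 0 := by simpa [hker] using Submodule.mem_map_of_mem (f := φ) hyx
  simpa [sub_eq_zero] using this

theorem Convex.mem_frontier_iff_exists_isMaxOn [FiniteDimensional ℝ E] (hs : Convex ℝ s)
    (hx : x ∈ s) : x ∈ frontier s ↔ ∃ f : StrongDual ℝ E, f ≠ 0 ∧ IsMaxOn f s x := by
  rw [mem_frontier_iff_notMem_interior hx]
  refine ⟨fun hxi ↦ ?_, fun ⟨f, hf, hmax⟩ hxi ↦
    hf (f.eq_zero_of_isMaxOn_of_mem_interior hmax hxi)⟩
  rcases (interior s).eq_empty_or_nonempty with hempty | hne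
  · obtain ⟨f, hf, hconst⟩ := hs.exists_ne_zero_forall_eq_of_interior_eq_empty hempty hx
    exact ⟨f, hf, fun y hy ↦ (hconst y hy).le⟩
  · exact hs.exists_isMaxOn_of_interior_nonempty hne hxi

end ConvexFrontier

theorem isMaxOn_iff_eq_csSup_image {α β : Type*} [ConditionallyCompleteLattice β] {f : α → β}
    {s : Set α} {x : α} (hbdd : BddAbove (f '' s)) (hx : x ∈ s) :
    IsMaxOn f s x ↔ f x = sSup (f '' s) := by
  refine ⟨fun hmax ↦ ?_, fun h y hy ↦ h ▸ le_csSup hbdd (mem_image_of_mem f hy)⟩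
  exact le_antisymm (le_csSup hbdd (mem_image_of_mem f hx))
    (csSup_le ((nonempty_of_mem hx).image f) (forall_mem_image.2 hmax))

namespace Matrix

variable {m n R : Type*} [Fintype m] [Fintype n] [CommSemiring R]

def traceTransposeMul (M : Matrix m n R) : Matrix m n R →ₗ[R] R :=
  traceLinearMap n R R ∘ₗ mulLeftLinearMap n R Mᵀ

@[simp]
theorem traceTransposeMul_apply (M N : Matrix m n R) : traceTransposeMul M N = (Mᵀ * N).trace :=
  rfl

theorem traceTransposeMul_surjective [DecidableEq m] [DecidableEq n] :
    Function.Surjective (traceTransposeMul : Matrix m n R → Matrix m n R →ₗ[R] R) := fun f ↦ by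
  refine ⟨of fun i j ↦ f (single i j 1), (stdBasis R m n).ext fun ⟨i, j⟩ ↦ ?_⟩
  simp [stdBasis_eq_single, trace_mul_single]

end Matrix

theorem Convex.mem_frontier_iff_exists_isMaxOn_trace {m n : Type*} [Fintype m] [Fintype n]
    [DecidableEq m] [DecidableEq n] {s : Set (Matrix m n ℝ)} (hs : Convex ℝ s) {x : Matrix m n ℝ}
    (hx : x ∈ s) :
    x ∈ frontier s ↔ ∃ M : Matrix m n ℝ, M ≠ 0 ∧ IsMaxOn (fun N ↦ (Mᵀ * N).trace) s x := by
  -- any norm will do: all of them induce the product topology used by `frontier`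
  let _ : NormedAddCommGroup (Matrix m n ℝ) := Matrix.normedAddCommGroup
  let _ : NormedSpace ℝ (Matrix m n ℝ) := Matrix.normedSpace
  refine (hs.mem_frontier_iff_exists_isMaxOn hx).trans ⟨?_, ?_⟩
  · rintro ⟨f, hf, hmax⟩
    obtain ⟨M, hM⟩ := traceTransposeMul_surjective f.toLinearMap
    have hMf : (fun N ↦ (Mᵀ * N).trace) = f := funext (LinearMap.congr_fun hM)
    refine ⟨M, ?_, hMf ▸ hmax⟩
    rintro rfl
    exact hf (ContinuousLinearMap.ext fun N ↦ by simpa using (congr_fun hMf N).symm)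
  · rintro ⟨M, hM, hmax⟩
    refine ⟨LinearMap.toContinuousLinearMap (traceTransposeMul M), fun h ↦ hM ?_, hmax⟩
    have : (Mᵀ * M).trace = 0 := by simpa using congr($h M)
    rwa [← conjTranspose_eq_transpose_of_trivial, trace_conjTranspose_mul_self_eq_zero_iff] at this

section Couplings

variable {I J : ℕ} {P : Measure (Fin I → ℝ)} {Q : Measure (Fin J → ℝ)}
  {π π₁ π₂ : Measure ((Fin I → ℝ) × (Fin J → ℝ))}

theorem smul_add_smul_mem_couplings {a b : ℝ≥0∞} (hab : a + b = 1) (h₁ : π₁ ∈ couplings P Q)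
    (h₂ : π₂ ∈ couplings P Q) : a • π₁ + b • π₂ ∈ couplings P Q := by
  obtain ⟨_, hP₁, hQ₁⟩ := h₁
  obtain ⟨_, hP₂, hQ₂⟩ := h₂
  refine ⟨⟨by simp [hab]⟩, ?_, ?_⟩
  · rw [Measure.map_add _ _ measurable_fst, Measure.map_smul, Measure.map_smul, hP₁, hP₂,
      ← add_smul, hab, one_smul]
  · rw [Measure.map_add _ _ measurable_snd, Measure.map_smul, Measure.map_smul, hQ₁, hQ₂,
      ← add_smul, hab, one_smul]

theorem abs_mul_le_sq_norm_add_sq_norm {ι κ : Type*} [Fintype ι] [Fintype κ] (x : ι → ℝ)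
    (y : κ → ℝ) (i : ι) (j : κ) : |x i * y j| ≤ ‖x‖ ^ 2 + ‖y‖ ^ 2 := by
  have hx : |x i| ≤ ‖x‖ := norm_le_pi_norm x i
  have hy : |y j| ≤ ‖y‖ := norm_le_pi_norm y j
  rw [abs_mul]
  nlinarith [abs_nonneg (x i), abs_nonneg (y j), sq_nonneg (‖x‖ - ‖y‖)]

variable (hP : Integrable (fun x ↦ ‖x‖ ^ 2) P) (hQ : Integrable (fun y ↦ ‖y‖ ^ 2) Q)
include hP hQ

theorem integrable_sq_norm_add_sq_norm_of_mem_couplings (hπ : π ∈ couplings P Q) :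
    Integrable (fun p ↦ ‖p.1‖ ^ 2 + ‖p.2‖ ^ 2) π := by
  obtain ⟨_, rfl, rfl⟩ := hπ
  exact (hP.comp_measurable measurable_fst).add (hQ.comp_measurable measurable_snd)

theorem integral_sq_norm_add_sq_norm_of_mem_couplings (hπ : π ∈ couplings P Q) :
    ∫ p, ‖p.1‖ ^ 2 + ‖p.2‖ ^ 2 ∂π = (∫ x, ‖x‖ ^ 2 ∂P) + ∫ y, ‖y‖ ^ 2 ∂Q := by
  obtain ⟨_, rfl, rfl⟩ := hπ
  rw [integral_map measurable_fst.aemeasurable hP.aestronglyMeasurable,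
    integral_map measurable_snd.aemeasurable hQ.aestronglyMeasurable]
  exact integral_add (hP.comp_measurable measurable_fst) (hQ.comp_measurable measurable_snd)

theorem integrable_mul_apply_of_mem_couplings (hπ : π ∈ couplings P Q) (i : Fin I) (j : Fin J) :
    Integrable (fun p ↦ p.1 i * p.2 j) π :=
  (integrable_sq_norm_add_sq_norm_of_mem_couplings hP hQ hπ).mono' (by fun_prop)
    (.of_forall fun p ↦ abs_mul_le_sq_norm_add_sq_norm p.1 p.2 i j)

theorem abs_crossCov_apply_le (hπ : π ∈ couplings P Q) (i : Fin I) (j : Fin J) :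
    |crossCov π i j| ≤ (∫ x, ‖x‖ ^ 2 ∂P) + ∫ y, ‖y‖ ^ 2 ∂Q := by
  rw [← integral_sq_norm_add_sq_norm_of_mem_couplings hP hQ hπ]
  exact (abs_integral_le_integral_abs).trans <| integral_mono
    (integrable_mul_apply_of_mem_couplings hP hQ hπ i j).abs
    (integrable_sq_norm_add_sq_norm_of_mem_couplings hP hQ hπ)
    fun p ↦ abs_mul_le_sq_norm_add_sq_norm p.1 p.2 i j

theorem crossCov_smul_add_smul {a b : ℝ≥0∞} (ha : a ≠ ∞) (hb : b ≠ ∞) (h₁ : π₁ ∈ couplings P Q)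
    (h₂ : π₂ ∈ couplings P Q) :
    crossCov (a • π₁ + b • π₂) = a.toReal • crossCov π₁ + b.toReal • crossCov π₂ := by
  ext i j
  simp only [crossCov, of_apply, Matrix.add_apply, Matrix.smul_apply, smul_eq_mul]
  rw [integral_add_measure
    ((integrable_mul_apply_of_mem_couplings hP hQ h₁ i j).smul_measure ha)
    ((integrable_mul_apply_of_mem_couplings hP hQ h₂ i j).smul_measure hb),
    integral_smul_measure, integral_smul_measure, smul_eq_mul, smul_eq_mul]

theorem convex_covSet : Convex ℝ (covSet P Q) := by
  rintro _ ⟨π₁, h₁, rfl⟩ _ ⟨π₂, h₂, rfl⟩ a b ha hb hab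
  refine ⟨ENNReal.ofReal a • π₁ + ENNReal.ofReal b • π₂, smul_add_smul_mem_couplings ?_ h₁ h₂, ?_⟩
  · rw [← ENNReal.ofReal_add ha hb, hab, ENNReal.ofReal_one]
  · rw [crossCov_smul_add_smul hP hQ ENNReal.ofReal_ne_top ENNReal.ofReal_ne_top h₁ h₂,
      ENNReal.toReal_ofReal ha, ENNReal.toReal_ofReal hb]

end Couplings

section MatrixNorm

attribute [local instance] Matrix.normedAddCommGroup Matrix.normedSpace

variable {I J : ℕ} {P : Measure (Fin I → ℝ)} {Q : Measure (Fin J → ℝ)}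

theorem isBounded_covSet (hP : Integrable (fun x ↦ ‖x‖ ^ 2) P)
    (hQ : Integrable (fun y ↦ ‖y‖ ^ 2) Q) : Bornology.IsBounded (covSet P Q) := by
  have hC : 0 ≤ (∫ x, ‖x‖ ^ 2 ∂P) + ∫ y, ‖y‖ ^ 2 ∂Q :=
    add_nonneg (integral_nonneg fun _ ↦ sq_nonneg _) (integral_nonneg fun _ ↦ sq_nonneg _)
  refine isBounded_iff_forall_norm_le.2 ⟨(∫ x, ‖x‖ ^ 2 ∂P) + ∫ y, ‖y‖ ^ 2 ∂Q, ?_⟩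
  rintro _ ⟨π, hπ, rfl⟩
  exact (norm_le_iff hC).2 (abs_crossCov_apply_le hP hQ hπ)

theorem bddAbove_image_trace_covSet (hP : Integrable (fun x ↦ ‖x‖ ^ 2) P)
    (hQ : Integrable (fun y ↦ ‖y‖ ^ 2) Q) (M : Matrix (Fin I) (Fin J) ℝ) :
    BddAbove ((fun N ↦ (Mᵀ * N).trace) '' covSet P Q) :=
  ((LinearMap.toContinuousLinearMap (traceTransposeMul M)).lipschitz.isBounded_image
    (isBounded_covSet hP hQ)).bddAbove

end MatrixNorm

theorem extreme_dependence_iff_general {I J : ℕ}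
    (P : Measure (Fin I → ℝ)) (Q : Measure (Fin J → ℝ))
    (hP : Integrable (fun x => ‖x‖ ^ 2) P) (hQ : Integrable (fun y => ‖y‖ ^ 2) Q)
    (π : Measure ((Fin I → ℝ) × (Fin J → ℝ))) (hπ : π ∈ couplings P Q) :
    crossCov π ∈ frontier (covSet P Q) ↔
      ∃ M : Matrix (Fin I) (Fin J) ℝ, M ≠ 0 ∧
        (M.transpose * crossCov π).trace =
          sSup ((fun π' => (M.transpose * crossCov π').trace) '' couplings P Q) := by
  have hσ : crossCov π ∈ covSet P Q := ⟨π, hπ, rfl⟩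
  rw [(convex_covSet hP hQ).mem_frontier_iff_exists_isMaxOn_trace hσ]
  refine exists_congr fun M ↦ and_congr_right fun _ ↦ ?_
  simpa only [covSet, image_image] using
    isMaxOn_iff_eq_csSup_image (bddAbove_image_trace_covSet hP hQ M) hσ

/-- `σ_π` lies on the boundary of the covariance set `F(P,Q)` iff
there is a nonzero matrix `M` with `Tr(Mᵀ σ_π) = sup_{π̃} Tr(Mᵀ σ_{π̃})`. -/
theorem extreme_dependence_iff {I J : ℕ} (hI : 0 < I) (hJ : 0 < J)
    (P : Measure (Fin I → ℝ)) (Q : Measure (Fin J → ℝ))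
    [IsProbabilityMeasure P] [IsProbabilityMeasure Q]
    (hP : Integrable (fun x => ‖x‖ ^ 2) P) (hQ : Integrable (fun y => ‖y‖ ^ 2) Q)
    (π : Measure ((Fin I → ℝ) × (Fin J → ℝ))) (hπ : π ∈ couplings P Q) :
    crossCov π ∈ frontier (covSet P Q) ↔
      ∃ M : Matrix (Fin I) (Fin J) ℝ, M ≠ 0 ∧
        (M.transpose * crossCov π).trace =
          sSup ((fun π' => (M.transpose * crossCov π').trace) '' couplings P Q) :=
  extreme_dependence_iff_general P Q hP hQ π hπ
end

section
/- Positive extreme dependence implies extreme dependence: if B is a compact basis in M_{I,J}(ℝ) and the coupling π ∈ Π(P,Q) has positive extreme dependence with respect to B, then σ_π lies on the topological boundary of the covariance set F(P,Q). -/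
open MeasureTheory Matrix Topology Filter

/-- The dual cone `K(B)` of a set of matrices `B`, for the trace pairing. -/
def dualCone {I J : ℕ} (B : Set (Matrix (Fin I) (Fin J) ℝ)) :
    Set (Matrix (Fin I) (Fin J) ℝ) :=
  {N | ∀ M ∈ B, 0 ≤ (M.transpose * N).trace}

/-! Separating `0` from the compact convex set `B` yields a matrix `N` with `tr(Mᵀ N) > 0` for every
`M ∈ B`; by compactness of `B` every positive multiple of `N` lies in the interior of `K(B)`.
If `σ_π` were an interior point of `F(P,Q)`, then `σ_π + tN ∈ F(P,Q)` for some `t > 0`, and the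
corresponding coupling would strictly dominate `π`. -/

instance Matrix.instLocallyConvexSpace {m n : Type*} : LocallyConvexSpace ℝ (Matrix m n ℝ) :=
  inferInstanceAs (LocallyConvexSpace ℝ (m → n → ℝ))

theorem Matrix.exists_trace_transpose_mul_eq {m n R : Type*} [Fintype m] [Fintype n]
    [DecidableEq m] [DecidableEq n] [CommSemiring R] (f : Matrix m n R →ₗ[R] R) :
    ∃ N : Matrix m n R, ∀ M, (Mᵀ * N).trace = f M := by
  refine ⟨of fun i j => f (single i j 1), fun M => ?_⟩
  conv_rhs => rw [matrix_eq_sum_single M]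
  simp only [map_sum, trace, diag, mul_apply, transpose_apply, of_apply]
  rw [Finset.sum_comm]
  refine Finset.sum_congr rfl fun i _ => Finset.sum_congr rfl fun j _ => ?_
  rw [← smul_eq_mul, ← map_smul, smul_single, smul_eq_mul, mul_one]

theorem Matrix.exists_forall_trace_transpose_mul_pos {m n : Type*} [Fintype m] [Fintype n]
    [DecidableEq m] [DecidableEq n] {B : Set (Matrix m n ℝ)} (hBclosed : IsClosed B)
    (hBconvex : Convex ℝ B) (hB0 : 0 ∉ B) : ∃ N : Matrix m n ℝ, ∀ M ∈ B, 0 < (Mᵀ * N).trace := by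
  obtain ⟨f, u, hu, hf⟩ := geometric_hahn_banach_point_closed hBconvex hBclosed hB0
  obtain ⟨N, hN⟩ := exists_trace_transpose_mul_eq (f : Matrix m n ℝ →ₗ[ℝ] ℝ)
  refine ⟨N, fun M hM => ?_⟩
  rw [hN]
  exact (map_zero f ▸ hu).trans (hf M hM)

theorem exists_pos_add_smul_mem_of_mem_interior {E : Type*} [AddCommGroup E] [Module ℝ E]
    [TopologicalSpace E] [ContinuousAdd E] [ContinuousSMul ℝ E] {s : Set E} {x : E}
    (hx : x ∈ interior s) (v : E) : ∃ t > (0 : ℝ), x + t • v ∈ s := by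
  have hcont : Continuous fun t : ℝ => x + t • v := by fun_prop
  have hnear : ∀ᶠ t : ℝ in 𝓝 0, x + t • v ∈ s := by
    refine hcont.continuousAt.eventually_mem ?_
    simpa using mem_interior_iff_mem_nhds.mp hx
  obtain ⟨t, hts, ht⟩ := ((hnear.filter_mono nhdsWithin_le_nhds).and
    (self_mem_nhdsWithin : ∀ᶠ t in 𝓝[>] (0 : ℝ), t ∈ Set.Ioi 0)).exists
  exact ⟨t, ht, hts⟩

theorem mem_interior_dualCone {I J : ℕ} {B : Set (Matrix (Fin I) (Fin J) ℝ)} (hB : IsCompact B)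
    {N : Matrix (Fin I) (Fin J) ℝ} (hN : ∀ M ∈ B, 0 < (Mᵀ * N).trace) :
    N ∈ interior (dualCone B) := by
  have hpair : Continuous fun p : Matrix (Fin I) (Fin J) ℝ × Matrix (Fin I) (Fin J) ℝ =>
      (p.2ᵀ * p.1).trace := by fun_prop
  have hpos : ∀ᶠ N' in 𝓝 N, ∀ M ∈ B, 0 < (Mᵀ * N').trace :=
    hB.eventually_forall_of_forall_eventually fun M hM =>
      (hpair.tendsto (N, M)).eventually (lt_mem_nhds (hN M hM))
  exact mem_interior_iff_mem_nhds.mpr (hpos.mono fun N' hN' M hM => (hN' M hM).le)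

theorem positive_extreme_implies_extreme_general {I J : ℕ}
    (P : Measure (Fin I → ℝ)) (Q : Measure (Fin J → ℝ))
    (B : Set (Matrix (Fin I) (Fin J) ℝ))
    (hBcompact : IsCompact B) (hBconvex : Convex ℝ B) (hB0 : (0 : Matrix (Fin I) (Fin J) ℝ) ∉ B)
    (π : Measure ((Fin I → ℝ) × (Fin J → ℝ))) (hπ : π ∈ couplings P Q)
    (hmax : ¬ ∃ π' ∈ couplings P Q, crossCov π' - crossCov π ∈ interior (dualCone B)) :
    crossCov π ∈ frontier (covSet P Q) := by
  refine ⟨subset_closure ⟨π, hπ, rfl⟩, fun hint => hmax ?_⟩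
  obtain ⟨N, hN⟩ := Matrix.exists_forall_trace_transpose_mul_pos hBcompact.isClosed hBconvex hB0
  obtain ⟨t, ht, π', hπ', hπ'cov⟩ := exists_pos_add_smul_mem_of_mem_interior hint N
  refine ⟨π', hπ', ?_⟩
  rw [hπ'cov, add_sub_cancel_left]
  refine mem_interior_dualCone hBcompact fun M hM => ?_
  rw [Matrix.mul_smul, trace_smul]
  exact smul_pos ht (hN M hM)

/-- positive extreme dependence implies extreme dependence, i.e. if no
coupling strictly dominates `π` in the conic order given by a compact basis `B`,
then `σ_π` lies on the boundary of the covariance set. -/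
theorem positive_extreme_implies_extreme {I J : ℕ} (hI : 0 < I) (hJ : 0 < J)
    (P : Measure (Fin I → ℝ)) (Q : Measure (Fin J → ℝ))
    [IsProbabilityMeasure P] [IsProbabilityMeasure Q]
    (hP : Integrable (fun x => ‖x‖ ^ 2) P) (hQ : Integrable (fun y => ‖y‖ ^ 2) Q)
    (B : Set (Matrix (Fin I) (Fin J) ℝ))
    (hBcompact : IsCompact B) (hBconvex : Convex ℝ B) (hB0 : (0 : Matrix (Fin I) (Fin J) ℝ) ∉ B)
    (π : Measure ((Fin I → ℝ) × (Fin J → ℝ))) (hπ : π ∈ couplings P Q)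
    (hmax : ¬ ∃ π' ∈ couplings P Q, crossCov π' - crossCov π ∈ interior (dualCone B)) :
    crossCov π ∈ frontier (covSet P Q) :=
  positive_extreme_implies_extreme_general P Q B hBcompact hBconvex hB0 π hπ hmax
end

section
/- Let P be the standard Gaussian measure on ℝ², let Q be the product of the standard Gaussian measure on ℝ and the uniform measure on (0,1), and let π₀ be the pushforward of P ⊗ Uniform(0,1) under the map ((x₁,x₂), u) ↦ ((x₁,x₂), (x₁,u)). Let A be the 2×2 matrix with A₁₁ = 1 and all other entries 0. Then π₀ belongs to Π(P,Q) and ∫ xᵀAy dπ₀(x,y) = sup over all π ∈ Π(P,Q) of ∫ xᵀAy dπ(x,y). -/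
open MeasureTheory Matrix ProbabilityTheory

/-- The standard Gaussian measure on `ℝ²`. -/
noncomputable def stdGauss2 : Measure (Fin 2 → ℝ) :=
  Measure.pi fun _ => gaussianReal 0 1

/-- The uniform measure on `(0,1)`. -/
noncomputable def unif01 : Measure ℝ := volume.restrict (Set.Ioo (0 : ℝ) 1)

/-- `Q`: a standard normal first component, independent of a second component uniform
on `(0,1)`. -/
noncomputable def gaussTimesUnif : Measure (Fin 2 → ℝ) :=
  ((gaussianReal 0 1).prod unif01).map fun p => ![p.1, p.2]

/-- The coupling `π₀`: `X = (X₁, X₂) ∼ P` and `Y = (X₁, U)` with `U` uniform on `(0,1)`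
independent of `X`. -/
noncomputable def pairedCoupling : Measure ((Fin 2 → ℝ) × (Fin 2 → ℝ)) :=
  (stdGauss2.prod unif01).map fun q => (q.1, ![q.1 0, q.2])

/-!
Since `A = e₁e₁ᵀ`, the objective is `E[X₁Y₁]`, and under any coupling both `X₁` and `Y₁` are
standard normal. Hence `E[X₁Y₁] ≤ (E[X₁²] + E[Y₁²]) / 2 = 1`, with equality when `Y₁ = X₁`,
which is exactly how `π₀` is built.
-/

open scoped NNReal

lemma integral_sq_gaussianReal_zero (v : ℝ≥0) : ∫ x, x ^ 2 ∂gaussianReal 0 v = v := by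
  have h := variance_eq_integral (μ := gaussianReal 0 v) (X := fun x => x) aemeasurable_id
  rw [variance_fun_id_gaussianReal, integral_id_gaussianReal] at h
  simpa using h.symm

lemma ProbabilityTheory.HasLaw.memLp_comp {Ω 𝓧 E : Type*} {mΩ : MeasurableSpace Ω}
    {m𝓧 : MeasurableSpace 𝓧} [NormedAddCommGroup E] {X : Ω → 𝓧} {μ : Measure 𝓧}
    {P : Measure Ω} {p : ENNReal}
    (hX : HasLaw X μ P) {f : 𝓧 → E} (hf : MemLp f p μ) : MemLp (f ∘ X) p P := by
  rw [← memLp_map_measure_iff (hX.map_eq ▸ hf.aestronglyMeasurable) hX.aemeasurable, hX.map_eq]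
  exact hf

lemma integral_mul_le_of_hasLaw {Ω : Type*} {mΩ : MeasurableSpace Ω} {P : Measure Ω}
    {X Y : Ω → ℝ} {μ ν : Measure ℝ} (hX : HasLaw X μ P) (hY : HasLaw Y ν P)
    (hμ : MemLp id 2 μ) (hν : MemLp id 2 ν) :
    ∫ ω, X ω * Y ω ∂P ≤ (∫ x, x ^ 2 ∂μ + ∫ y, y ^ 2 ∂ν) / 2 := by
  have hX2 : MemLp X 2 P := hX.memLp_comp hμ
  have hY2 : MemLp Y 2 P := hY.memLp_comp hν
  calc ∫ ω, X ω * Y ω ∂P ≤ ∫ ω, (X ω ^ 2 + Y ω ^ 2) / 2 ∂P := by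
        refine integral_mono (hX2.integrable_mul hY2) ?_ fun ω => ?_
        · exact (hX2.integrable_sq.add hY2.integrable_sq).div_const 2
        · linarith [two_mul_le_add_sq (X ω) (Y ω)]
    _ = (∫ ω, X ω ^ 2 ∂P + ∫ ω, Y ω ^ 2 ∂P) / 2 := by
        rw [integral_div, integral_add hX2.integrable_sq hY2.integrable_sq]
    _ = (∫ x, x ^ 2 ∂μ + ∫ y, y ^ 2 ∂ν) / 2 := by
        rw [← hX.integral_comp (f := fun x => x ^ 2) (by fun_prop),
          ← hY.integral_comp (f := fun x => x ^ 2) (by fun_prop)]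
        rfl

instance : IsProbabilityMeasure unif01 :=
  ⟨by simp [unif01, Real.volume_Ioo]⟩

instance : IsProbabilityMeasure stdGauss2 := by
  unfold stdGauss2; infer_instance

lemma hasLaw_eval_stdGauss2 (i : Fin 2) :
    HasLaw (fun x => x i) (gaussianReal 0 1) stdGauss2 :=
  (measurePreserving_eval (fun _ : Fin 2 => gaussianReal 0 1) i).hasLaw

lemma measurable_vecCons_pair {α : Type*} [MeasurableSpace α] :
    Measurable fun p : α × α => ![p.1, p.2] := by
  refine measurable_pi_lambda _ fun i => ?_
  fin_cases i
  exacts [measurable_fst, measurable_snd]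

lemma hasLaw_eval_zero_gaussTimesUnif :
    HasLaw (fun y => y 0) (gaussianReal 0 1) gaussTimesUnif where
  aemeasurable := (measurable_pi_apply 0).aemeasurable
  map_eq := by
    rw [gaussTimesUnif, Measure.map_map (measurable_pi_apply 0) measurable_vecCons_pair]
    exact (measurePreserving_fst (μ := gaussianReal 0 1) (ν := unif01)).map_eq

lemma integral_fst_mul_snd_le_one {ρ : Measure ((Fin 2 → ℝ) × (Fin 2 → ℝ))}
    (hρ : ρ ∈ couplings stdGauss2 gaussTimesUnif) : ∫ p, p.1 0 * p.2 0 ∂ρ ≤ 1 := by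
  obtain ⟨-, hfst, hsnd⟩ := hρ
  have hX : HasLaw (fun p => p.1 0) (gaussianReal 0 1) ρ :=
    (hasLaw_eval_stdGauss2 0).comp ⟨measurable_fst.aemeasurable, hfst⟩
  have hY : HasLaw (fun p => p.2 0) (gaussianReal 0 1) ρ :=
    hasLaw_eval_zero_gaussTimesUnif.comp ⟨measurable_snd.aemeasurable, hsnd⟩
  have hL2 : MemLp id 2 (gaussianReal 0 1) := memLp_id_gaussianReal 2
  simpa [integral_sq_gaussianReal_zero] using integral_mul_le_of_hasLaw hX hY hL2 hL2

lemma measurable_pairedCouplingMap :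
    Measurable fun q : (Fin 2 → ℝ) × ℝ => (q.1, ![q.1 0, q.2]) :=
  measurable_fst.prodMk <|
    measurable_vecCons_pair.comp (f := fun q : (Fin 2 → ℝ) × ℝ => (q.1 0, q.2)) (by fun_prop)

lemma pairedCoupling_mem_couplings : pairedCoupling ∈ couplings stdGauss2 gaussTimesUnif := by
  refine ⟨Measure.isProbabilityMeasure_map measurable_pairedCouplingMap.aemeasurable, ?_, ?_⟩
  · rw [pairedCoupling, Measure.map_map measurable_fst measurable_pairedCouplingMap]
    exact (measurePreserving_fst (μ := stdGauss2) (ν := unif01)).map_eq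
  · have hmap : MeasurePreserving (Prod.map (fun x : Fin 2 → ℝ => x 0) id)
        (stdGauss2.prod unif01) ((gaussianReal 0 1).prod unif01) :=
      (hasLaw_eval_stdGauss2 0).measurePreserving (measurable_pi_apply 0) |>.prod
        (MeasurePreserving.id unif01)
    rw [pairedCoupling, Measure.map_map measurable_snd measurable_pairedCouplingMap,
      gaussTimesUnif, ← hmap.map_eq, Measure.map_map measurable_vecCons_pair hmap.measurable]
    rfl

lemma integral_fst_mul_snd_pairedCoupling : ∫ p, p.1 0 * p.2 0 ∂pairedCoupling = 1 := by
  rw [pairedCoupling, integral_map measurable_pairedCouplingMap.aemeasurable (by fun_prop)]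
  simp only [Matrix.cons_val_zero, ← sq]
  rw [integral_fun_fst (fun x : Fin 2 → ℝ => x 0 ^ 2), probReal_univ, one_smul]
  exact ((hasLaw_eval_stdGauss2 0).integral_comp (f := fun x => x ^ 2) (by fun_prop)).trans
    (integral_sq_gaussianReal_zero 1)

lemma dotProduct_mulVec_single_zero_zero (x y : Fin 2 → ℝ) :
    x ⬝ᵥ !![(1 : ℝ), 0; 0, 0] *ᵥ y = x 0 * y 0 := by
  simp [dotProduct, mulVec, Fin.sum_univ_two]

/-- the coupling `π₀` belongs to `Π(P,Q)` and maximizes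
`∫ xᵀAy dπ` over `Π(P,Q)`, where `A = [[1,0],[0,0]]`. -/
theorem gaussian_example_maximal :
    pairedCoupling ∈ couplings stdGauss2 gaussTimesUnif ∧
      (∫ p, p.1 ⬝ᵥ (!![(1 : ℝ), 0; 0, 0]).mulVec p.2 ∂pairedCoupling) =
        sSup ((fun π => ∫ p, p.1 ⬝ᵥ (!![(1 : ℝ), 0; 0, 0]).mulVec p.2 ∂π) ''
          couplings stdGauss2 gaussTimesUnif) := by
  simp only [dotProduct_mulVec_single_zero_zero, integral_fst_mul_snd_pairedCoupling]
  refine ⟨pairedCoupling_mem_couplings, (IsGreatest.csSup_eq ⟨?_, ?_⟩).symm⟩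
  · exact ⟨pairedCoupling, pairedCoupling_mem_couplings, integral_fst_mul_snd_pairedCoupling⟩
  · rintro _ ⟨ρ, hρ, rfl⟩
    exact integral_fst_mul_snd_le_one hρ
end
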